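/- Let n ≥ 4, N ≥ n, ε > 0, and x ∈ Δ^N with x(1) ≤ ε. For every partition π of [n] containing at least two non-singleton blocks, κ^N_n(x, π) ≤ κ^N_2(x, {{1,2}})·(Nε − 1)/(N − 3). -/

import Mathlib

/-!
A sample `f` consistent with `π` is recorded by `((f i, f j), (f k, f l))`, where `i, j` lie in one
non-singleton block and `k, l` in another: a pair of same-family pairs from two different families.
These four values leave at most `(N - 4)^(n - 4)` (falling power) samples, so `κ_n(x, π)` is at most
the number of such pairs of pairs divided by `N (N - 1) (N - 2) (N - 3)`. The first pair can be
chosen in `N (N - 1) κ_2` ways; then the third point lies outside its family (at most `N - 2` ways)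
and the fourth in the family of the third (at most `Nε - 1` ways).
-/

open scoped Classical in
/-- Urn-without-replacement partition kernel. -/
noncomputable def urnKernel (N n : ℕ) (c : Fin N → ℕ) (P : Fin n → Fin n → Prop) : ℝ :=
  ((Finset.univ.filter fun f : Fin n ↪ Fin N =>
      ∀ i j, P i j ↔ c (f i) = c (f j)).card : ℝ) /
    (Fintype.card (Fin n ↪ Fin N) : ℝ)

open Finset Fintype

section Embeddings

variable {α β : Type*} [Fintype α] [Fintype β] [DecidableEq α] [DecidableEq β]

/-- An embedding that agrees with `f₀` on `s` is determined by an embedding `sᶜ ↪ (f₀ '' s)ᶜ`. -/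
theorem card_embedding_eqOn_le (s : Finset α) (f₀ : α ↪ β) :
    #{f : α ↪ β | ∀ x ∈ s, f x = f₀ x} ≤ (card β - #s).descFactorial (card α - #s) := by
  have hcompl : ∀ f : α ↪ β, (∀ x ∈ s, f x = f₀ x) → ∀ x ∉ s, f x ∉ s.map f₀ := by
    intro f hf x hx hmem
    obtain ⟨y, hy, hfy⟩ := mem_map.mp hmem
    rw [← hf y hy] at hfy
    exact hx (f.injective hfy ▸ hy)
  let restrict : {f : α ↪ β // ∀ x ∈ s, f x = f₀ x} → (↥sᶜ ↪ ↥(s.map f₀)ᶜ) := fun f =>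
    ⟨fun x => ⟨f.1 x, mem_compl.mpr (hcompl f.1 f.2 x (mem_compl.mp x.2))⟩,
      fun x y h => Subtype.ext (f.1.injective (congrArg Subtype.val h))⟩
  have hrestrict : Function.Injective restrict := by
    intro f g h
    refine Subtype.ext (DFunLike.ext _ _ fun x => ?_)
    by_cases hx : x ∈ s
    · rw [f.2 x hx, g.2 x hx]
    · exact congrArg Subtype.val (DFunLike.congr_fun h ⟨x, mem_compl.mpr hx⟩)
  calc #{f : α ↪ β | ∀ x ∈ s, f x = f₀ x}
      = card {f : α ↪ β // ∀ x ∈ s, f x = f₀ x} := (Fintype.card_subtype _).symm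
    _ ≤ card (↥sᶜ ↪ ↥(s.map f₀)ᶜ) := card_le_of_injective restrict hrestrict
    _ = (card β - #s).descFactorial (card α - #s) := by
      simp only [card_embedding_eq, card_coe, card_compl, card_map]

theorem card_le_descFactorial_mul_of_eqOn {δ : Type*} [DecidableEq δ] {A : Finset (α ↪ β)}
    {t : Finset δ} (s : Finset α) (φ : (α ↪ β) → δ) (hφt : ∀ f ∈ A, φ f ∈ t)
    (hφ : ∀ f g, φ f = φ g → ∀ x ∈ s, f x = g x) :
    #A ≤ (card β - #s).descFactorial (card α - #s) * #t := by
  refine card_le_mul_card_image_of_maps_to hφt _ fun z _ => ?_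
  rcases (A.filter fun f => φ f = z).eq_empty_or_nonempty with hempty | ⟨f₀, hf₀⟩
  · simp [hempty]
  refine le_trans (card_le_card fun f hf => ?_) (card_embedding_eqOn_le s f₀)
  rw [mem_filter] at hf hf₀ ⊢
  exact ⟨mem_univ f, hφ f f₀ (hf.2.trans hf₀.2.symm)⟩

end Embeddings

theorem card_filter_prod_eq_sum {α β : Type*} [Fintype α] [Fintype β] (p : α → Prop)
    (q : α → β → Prop) [DecidablePred p] [∀ a, DecidablePred (q a)] :
    #{z : α × β | p z.1 ∧ q z.1 z.2} = ∑ a with p a, #{b | q a b} := by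
  simp only [card_filter, Fintype.sum_prod_type, sum_filter, ite_and, sum_ite_irrel, sum_const_zero]

section Families

variable {ι κ : Type*} [Fintype ι] [DecidableEq ι] [DecidableEq κ] (c : ι → κ)

def sameFamilyPairs : Finset (ι × ι) := {p | p.1 ≠ p.2 ∧ c p.1 = c p.2}

def disjointMergerPairs : Finset ((ι × ι) × (ι × ι)) :=
  {z | z.1 ∈ sameFamilyPairs c ∧ z.2 ∈ sameFamilyPairs c ∧ c z.1.1 ≠ c z.2.1}

variable {c}

theorem two_le_card_family_of_mem_sameFamilyPairs {ab : ι × ι} (hab : ab ∈ sameFamilyPairs c) :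
    2 ≤ #{b | c b = c ab.1} := by
  simp only [sameFamilyPairs, mem_filter, mem_univ, true_and] at hab
  calc 2 = #{ab.1, ab.2} := (card_pair hab.1).symm
    _ ≤ #{b | c b = c ab.1} := card_le_card fun b hb => by
      rcases mem_insert.mp hb with rfl | hb
      · simp
      · simp [mem_singleton.mp hb, hab.2]

theorem card_sameFamilyPairs_filter_ne_le {K : ℝ} (hK : ∀ a, (#{b | c b = c a} : ℝ) ≤ K)
    {ab : ι × ι} (hab : ab ∈ sameFamilyPairs c) :
    (#{pq ∈ sameFamilyPairs c | c ab.1 ≠ c pq.1} : ℝ) ≤ (card ι - 2) * (K - 1) := by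
  have hsplit : #{pq ∈ sameFamilyPairs c | c ab.1 ≠ c pq.1}
      = ∑ p with c ab.1 ≠ c p, #(({b | c b = c p} : Finset ι).erase p) := by
    rw [sameFamilyPairs, filter_filter]
    calc _ = #{z : ι × ι | c ab.1 ≠ c z.1 ∧ (z.2 ≠ z.1 ∧ c z.2 = c z.1)} := by
          congr 1; ext z; simp only [mem_filter, mem_univ, true_and]; grind
      _ = _ := by
          rw [card_filter_prod_eq_sum (fun p => c ab.1 ≠ c p) fun p b => b ≠ p ∧ c b = c p]
          refine sum_congr rfl fun p _ => congrArg card ?_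
          ext b; simp only [mem_filter, mem_univ, true_and, mem_erase]
  have hfiber : ∀ p, (#(({b | c b = c p} : Finset ι).erase p) : ℝ) ≤ K - 1 := fun p => by
    rw [card_erase_of_mem (by simp), Nat.cast_sub (card_pos.mpr ⟨p, by simp⟩), Nat.cast_one]
    linarith [hK p]
  have hrest : (#{p | c ab.1 ≠ c p} : ℝ) ≤ card ι - 2 := by
    have hcard := card_filter_add_card_filter_not (s := univ) (fun p : ι => c p = c ab.1)
    have h2 := two_le_card_family_of_mem_sameFamilyPairs hab
    rw [card_univ] at hcard
    simp only [ne_comm (a := c ab.1)]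
    have : (#{p | c p = c ab.1} : ℝ) + #{p | ¬c p = c ab.1} = card ι := by exact_mod_cast hcard
    have : (2 : ℝ) ≤ #{p | c p = c ab.1} := by exact_mod_cast h2
    linarith
  have hK1 : 0 ≤ K - 1 := by
    have h2 : (2 : ℝ) ≤ #{b | c b = c ab.1} := by
      exact_mod_cast two_le_card_family_of_mem_sameFamilyPairs hab
    linarith [hK ab.1]
  rw [hsplit, Nat.cast_sum]
  calc _ ≤ ∑ p with c ab.1 ≠ c p, (K - 1) := sum_le_sum fun p _ => hfiber p
    _ ≤ _ := by rw [sum_const, nsmul_eq_mul]; gcongr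

theorem card_disjointMergerPairs_le {K : ℝ} (hK : ∀ a, (#{b | c b = c a} : ℝ) ≤ K) :
    (#(disjointMergerPairs c) : ℝ) ≤ #(sameFamilyPairs c) * ((card ι - 2) * (K - 1)) := by
  have hsplit : #(disjointMergerPairs c)
      = ∑ ab ∈ sameFamilyPairs c, #{pq ∈ sameFamilyPairs c | c ab.1 ≠ c pq.1} := by
    rw [disjointMergerPairs, card_filter_prod_eq_sum (· ∈ sameFamilyPairs c)
      fun ab pq => pq ∈ sameFamilyPairs c ∧ c ab.1 ≠ c pq.1, filter_univ_mem]
    simp only [← filter_filter, filter_univ_mem]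
  rw [hsplit, Nat.cast_sum, ← nsmul_eq_mul, ← sum_const]
  exact sum_le_sum fun ab hab => card_sameFamilyPairs_filter_ne_le hK hab

end Families

theorem card_quadruple_of_two_blocks {α : Type*} [DecidableEq α] {P : α → α → Prop}
    (hP : Equivalence P) {i j k l : α} (hij : i ≠ j) (hkl : k ≠ l) (hPij : P i j) (hPkl : P k l) (hPik : ¬ P i k) :
    #({i, j, k, l} : Finset α) = 4 := by
  have hik : i ≠ k := by rintro rfl; exact hPik (hP.refl i)
  have hjk : j ≠ k := by rintro rfl; exact hPik hPij
  have hil : i ≠ l := by rintro rfl; exact hPik (hP.symm hPkl)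
  have hjl : j ≠ l := by rintro rfl; exact hPik (hP.trans hPij (hP.symm hPkl))
  simp [card_insert_of_notMem, *]

section Sampling

variable {α β κ : Type*} [Fintype α] [Fintype β] [DecidableEq α] [DecidableEq β] [DecidableEq κ]

theorem card_consistent_embeddings_le (c : β → κ) {P : α → α → Prop} (hP : Equivalence P)
    [DecidablePred fun f : α ↪ β => ∀ a b, P a b ↔ c (f a) = c (f b)] {i j k l : α}
    (hij : i ≠ j) (hkl : k ≠ l) (hPij : P i j) (hPkl : P k l) (hPik : ¬ P i k) :
    #{f : α ↪ β | ∀ a b, P a b ↔ c (f a) = c (f b)}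
      ≤ (card β - 4).descFactorial (card α - 4) * #(disjointMergerPairs c) := by
  rw [← card_quadruple_of_two_blocks hP hij hkl hPij hPkl hPik]
  refine card_le_descFactorial_mul_of_eqOn _ (fun f => ((f i, f j), (f k, f l))) ?_ ?_
  · intro f hf
    have hf := (mem_filter.mp hf).2
    simp only [disjointMergerPairs, sameFamilyPairs, mem_filter, mem_univ, true_and]
    exact ⟨⟨f.injective.ne hij, (hf i j).mp hPij⟩, ⟨f.injective.ne hkl, (hf k l).mp hPkl⟩,
      fun h => hPik ((hf i k).mpr h)⟩
  · intro f g hfg x hx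
    simp only [Prod.mk.injEq] at hfg
    simp only [mem_insert, mem_singleton] at hx
    rcases hx with rfl | rfl | rfl | rfl <;> tauto

end Sampling

open scoped Classical in
theorem urnKernel_eq_card_div (N n : ℕ) (c : Fin N → ℕ) (P : Fin n → Fin n → Prop) :
    urnKernel N n c P
      = #{f : Fin n ↪ Fin N | ∀ i j, P i j ↔ c (f i) = c (f j)} / N.descFactorial n := by
  rw [urnKernel, card_embedding_eq, Fintype.card_fin, Fintype.card_fin]

theorem urnKernel_two_eq (N : ℕ) (c : Fin N → ℕ) :
    urnKernel N 2 c (fun _ _ => True) = #(sameFamilyPairs c) / N.descFactorial 2 := by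
  rw [urnKernel_eq_card_div]
  congr 2
  refine card_bij (fun f _ => (f 0, f 1)) ?_ ?_ ?_
  · intro f hf
    simp only [sameFamilyPairs, mem_filter, mem_univ, true_and] at hf ⊢
    exact ⟨f.injective.ne zero_ne_one, (hf 0 1).mp trivial⟩
  · intro f _ g _ h
    simp only [Prod.mk.injEq] at h
    refine DFunLike.ext _ _ fun t => ?_
    fin_cases t
    exacts [h.1, h.2]
  · intro p hp
    simp only [sameFamilyPairs, mem_filter, mem_univ, true_and] at hp
    refine ⟨Function.Embedding.embFinTwo hp.1, ?_, rfl⟩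
    simp [Fin.forall_fin_two, Function.Embedding.embFinTwo_apply_zero,
      Function.Embedding.embFinTwo_apply_one, hp.2, eq_comm]

theorem cast_descFactorial_eq_mul {N n : ℕ} (hn : 4 ≤ n) (hN : 2 ≤ N) :
    (N.descFactorial n : ℝ)
      = (N - 4).descFactorial (n - 4) * (N.descFactorial 2 * ((N - 2) * (N - 3))) := by
  rw [← Nat.descFactorial_mul_descFactorial hn, ← Nat.descFactorial_mul_descFactorial
    (show 2 ≤ 4 by norm_num), Nat.cast_mul, Nat.cast_mul, Nat.cast_descFactorial_two,
    Nat.cast_sub hN]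
  ring

theorem stmt11_general (N n : ℕ) (hN : n ≤ N)
    (ε : ℝ)
    (x : ℕ → ℝ)
    (hxa : Antitone x)
    (hxε : x 0 ≤ ε)
    (c : Fin N → ℕ)
    (hc : ∀ ℓ, ((Finset.univ.filter fun a => c a = ℓ).card : ℝ) = (N : ℝ) * x ℓ)
    (P : Fin n → Fin n → Prop) (hP : Equivalence P)
    (hblocks : ∃ i j k l : Fin n, i ≠ j ∧ k ≠ l ∧ P i j ∧ P k l ∧ ¬ P i k) :
    urnKernel N n c P ≤
      urnKernel N 2 c (fun _ _ => True) * (((N : ℝ) * ε - 1) / ((N : ℝ) - 3)) := by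
  classical
  obtain ⟨i, j, k, l, hij, hkl, hPij, hPkl, hPik⟩ := hblocks
  have hn : 4 ≤ n := by
    simpa [card_quadruple_of_two_blocks hP hij hkl hPij hPkl hPik] using
      card_le_univ ({i, j, k, l} : Finset (Fin n))
  have hN4 : (4 : ℝ) ≤ N := by exact_mod_cast hn.trans hN
  have hfamily : ∀ a, (#{b | c b = c a} : ℝ) ≤ N * ε := fun a => by
    rw [hc]
    gcongr
    exact (hxa (Nat.zero_le _)).trans hxε
  have hA := card_consistent_embeddings_le c hP hij hkl hPij hPkl hPik
  have hQ := card_disjointMergerPairs_le hfamily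
  simp only [Fintype.card_fin] at hA hQ
  have hN2 : (0 : ℝ) < N - 2 := by linarith
  have hN3 : (0 : ℝ) < N - 3 := by linarith
  rw [urnKernel_eq_card_div, urnKernel_two_eq, cast_descFactorial_eq_mul hn (by omega)]
  calc _ ≤ ((N - 4).descFactorial (n - 4) * #(disjointMergerPairs c) : ℝ)
        / ((N - 4).descFactorial (n - 4) * (N.descFactorial 2 * ((N - 2) * (N - 3)))) := by
        gcongr
        exact_mod_cast hA
    _ ≤ ((N - 4).descFactorial (n - 4) * (#(sameFamilyPairs c) * ((N - 2) * (N * ε - 1))))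
        / ((N - 4).descFactorial (n - 4) * (N.descFactorial 2 * ((N - 2) * (N - 3)))) := by
        gcongr
    _ = _ := by
      have hM : ((N - 4).descFactorial (n - 4) : ℝ) ≠ 0 :=
        mod_cast (Nat.descFactorial_pos.mpr (by omega)).ne'
      rw [mul_div_mul_left _ _ hM, mul_div_mul_comm, mul_div_mul_left _ _ hN2.ne']

/-- For `x ∈ Δ^N` with all family sizes at most `εN` and a partition `π` of `[n]`
with at least two non-singleton blocks,
`κ^N_n(x,π) ≤ κ^N_2(x,{{1,2}})·(Nε − 1)/(N − 3)`. -/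
theorem stmt11 (N n : ℕ) (hn : 4 ≤ n) (hN : n ≤ N)
    (ε : ℝ) (hε : 0 < ε)
    (x : ℕ → ℝ)
    (hx0 : ∀ i, 0 ≤ x i) (hxa : Antitone x) (hxs : Summable x) (hx1 : ∑' i, x i = 1)
    (hxN : ∀ i, ∃ m : ℕ, (N : ℝ) * x i = m)
    (hxε : x 0 ≤ ε)
    (c : Fin N → ℕ)
    (hc : ∀ ℓ, ((Finset.univ.filter fun a => c a = ℓ).card : ℝ) = (N : ℝ) * x ℓ)
    (P : Fin n → Fin n → Prop) (hP : Equivalence P)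
    (hblocks : ∃ i j k l : Fin n, i ≠ j ∧ k ≠ l ∧ P i j ∧ P k l ∧ ¬ P i k) :
    urnKernel N n c P ≤
      urnKernel N 2 c (fun _ _ => True) * (((N : ℝ) * ε - 1) / ((N : ℝ) - 3)) :=
  stmt11_general N n hN ε x hxa hxε c hc P hP hblocks
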